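/- arXiv:math/0610826 — 2 statements merged into one kernel-verified Lean document; each statement's English description precedes it below -/
import Mathlib

section
/- Let E_n(x) = (1/n)·Σᵢ Q(xᵢ) - (2/(n(n-1)))·Σ_{i<j} log|xᵢ - xⱼ| for x ∈ ℝⁿ with distinct coordinates, and let Δ_n = inf over such x of E_n(x). Then Δ_n ≤ Δ_{n+1} for all n ≥ 2. -/
open Finset

/-!
Delete the `i`-th point of an `(n + 1)`-point configuration `y` and average over `i`: every point
of `y` survives in `n` of the deletions and every pair in `n - 1` of them, so
`(n + 1) E_{n+1}(y) = ∑ᵢ E_n(yⁱ)`. Each `E_n(yⁱ)` is at least `Δ_n`, hence so is `E_{n+1}(y)`.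
For `Δ_n` to be a genuine infimum, `E_n` must be bounded below; this holds because
`log |a - b| ≤ |a| + |b|` while `Q` grows quadratically.
-/

/-- The discrete energy of a configuration of `n` points. -/
noncomputable def discreteEnergy (Q : ℝ → ℝ) (n : ℕ) (x : Fin n → ℝ) : ℝ :=
  (1 / (n : ℝ)) * ∑ i, Q (x i)
    - (2 / ((n : ℝ) * ((n : ℝ) - 1))) *
        ∑ p ∈ Finset.univ.filter (fun p : Fin n × Fin n => p.1 < p.2),
          Real.log |x p.1 - x p.2|

/-- The minimal discrete energy over configurations with distinct coordinates. -/
noncomputable def minEnergy (Q : ℝ → ℝ) (n : ℕ) : ℝ :=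
  sInf {E : ℝ | ∃ x : Fin n → ℝ, Function.Injective x ∧ E = discreteEnergy Q n x}

theorem Fin.sum_sum_succAbove {M : Type*} [AddCommGroup M] {n : ℕ} (f : Fin (n + 1) → M) :
    ∑ i : Fin (n + 1), ∑ j, f (i.succAbove j) = n • ∑ i, f i := by
  have hdel (i : Fin (n + 1)) : ∑ j, f (i.succAbove j) = ∑ k, f k - f i :=
    eq_sub_of_add_eq' (Fin.sum_univ_succAbove f i).symm
  simp only [hdel, sum_sub_distrib, sum_const, succ_nsmul, add_sub_cancel_right]

theorem Fin.card_filter_ne_and_ne {n : ℕ} {a b : Fin (n + 1)} (hab : a ≠ b) :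
    #(univ.filter fun i => a ≠ i ∧ b ≠ i) = n - 1 := by
  have : (univ.filter fun i => a ≠ i ∧ b ≠ i) = {a, b}ᶜ := by
    ext i
    simp [eq_comm]
  rw [this, card_compl, card_pair hab, Fintype.card_fin]
  omega

theorem Fin.sum_filter_lt_succAbove {M : Type*} [AddCommMonoid M] {n : ℕ} (i : Fin (n + 1))
    (F : Fin (n + 1) × Fin (n + 1) → M) :
    ∑ p ∈ univ.filter (fun p : Fin n × Fin n => p.1 < p.2), F (i.succAbove p.1, i.succAbove p.2)
      = ∑ q ∈ univ.filter (fun q : Fin (n + 1) × Fin (n + 1) => q.1 < q.2 ∧ q.1 ≠ i ∧ q.2 ≠ i),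
          F q := by
  refine sum_nbij (fun p => (i.succAbove p.1, i.succAbove p.2)) ?_ ?_ ?_ fun _ _ => rfl
  · intro p hp
    simp only [mem_filter, mem_univ, true_and] at hp ⊢
    exact ⟨succAbove_lt_succAbove_iff.2 hp, succAbove_ne i p.1, succAbove_ne i p.2⟩
  · intro p _ q _ h
    simp only [Prod.mk.injEq] at h
    exact Prod.ext (succAbove_right_injective h.1) (succAbove_right_injective h.2)
  · rintro ⟨a, b⟩ hq
    simp only [coe_filter, Set.mem_ofPred_eq, mem_univ, true_and] at hq
    obtain ⟨hlt, ha, hb⟩ := hq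
    obtain ⟨a', rfl⟩ := exists_succAbove_eq ha
    obtain ⟨b', rfl⟩ := exists_succAbove_eq hb
    exact ⟨(a', b'), by simpa using succAbove_lt_succAbove_iff.1 hlt, rfl⟩

theorem Fin.sum_sum_filter_lt_succAbove {M : Type*} [AddCommMonoid M] {n : ℕ}
    (F : Fin (n + 1) × Fin (n + 1) → M) :
    ∑ i : Fin (n + 1), ∑ p ∈ univ.filter (fun p : Fin n × Fin n => p.1 < p.2),
        F (i.succAbove p.1, i.succAbove p.2)
      = (n - 1) • ∑ q ∈ univ.filter (fun q : Fin (n + 1) × Fin (n + 1) => q.1 < q.2), F q := by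
  have hdel (i : Fin (n + 1)) :
      ∑ p ∈ univ.filter (fun p : Fin n × Fin n => p.1 < p.2), F (i.succAbove p.1, i.succAbove p.2)
        = ∑ q ∈ univ.filter (fun q : Fin (n + 1) × Fin (n + 1) => q.1 < q.2),
            if q.1 ≠ i ∧ q.2 ≠ i then F q else 0 := by
    rw [sum_filter_lt_succAbove, ← sum_filter, filter_filter]
  simp only [hdel]
  rw [sum_comm, smul_sum]
  refine sum_congr rfl fun q hq => ?_
  rw [← sum_filter, Finset.sum_const, card_filter_ne_and_ne (mem_filter.1 hq).2.ne]

theorem discreteEnergy_succ_eq_sum (Q : ℝ → ℝ) {n : ℕ} (hn : 2 ≤ n) (y : Fin (n + 1) → ℝ) :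
    (n + 1) * discreteEnergy Q (n + 1) y
      = ∑ i : Fin (n + 1), discreteEnergy Q n (y ∘ i.succAbove) := by
  have hn₁ : (n : ℝ) - 1 ≠ 0 := by
    have : (2 : ℝ) ≤ n := by exact_mod_cast hn
    linarith
  have hpairs := Fin.sum_sum_filter_lt_succAbove fun q => Real.log |y q.1 - y q.2|
  rw [nsmul_eq_mul, Nat.cast_sub (by omega), Nat.cast_one] at hpairs
  dsimp only at hpairs
  simp only [discreteEnergy, Function.comp_apply, sum_sub_distrib, ← mul_sum,
    Fin.sum_sum_succAbove fun k => Q (y k), hpairs, nsmul_eq_mul]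
  push_cast [add_sub_cancel_right]
  field_simp

theorem ConvexOn.exists_sub_mul_abs_le {g : ℝ → ℝ} (hg : ConvexOn ℝ Set.univ g) :
    ∃ A : ℝ, ∀ t, g 0 - A * |t| ≤ g t := by
  have hslope := hg.slope_mono (Set.mem_univ 0)
  refine ⟨|g (-1) - g 0| + |g 1 - g 0|, fun t => ?_⟩
  rcases lt_trichotomy t 0 with ht | rfl | ht
  · have h : slope g 0 t ≤ slope g 0 1 := hslope (by simp [ht.ne]) (by simp) (by linarith)
    simp only [slope_def_field, sub_zero, div_one] at h
    rw [div_le_iff_of_neg ht] at h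
    rw [abs_of_neg ht]
    nlinarith [le_abs_self (g 1 - g 0), abs_nonneg (g (-1) - g 0)]
  · simp
  · have h : slope g 0 (-1) ≤ slope g 0 t := hslope (by simp) (by simp [ht.ne']) (by linarith)
    simp only [slope_def_field, sub_zero, div_neg, div_one] at h
    rw [le_div_iff₀ ht] at h
    rw [abs_of_pos ht]
    nlinarith [le_abs_self (g (-1) - g 0), abs_nonneg (g 1 - g 0)]

theorem exists_le_sub_mul_abs {Q : ℝ → ℝ} {ρ : ℝ} (hρ : 0 < ρ)
    (hQ : ConvexOn ℝ Set.univ (fun x => Q x - ρ * x ^ 2)) (c : ℝ) :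
    ∃ C : ℝ, ∀ t, C ≤ Q t - c * |t| := by
  obtain ⟨A, hA⟩ := hQ.exists_sub_mul_abs_le
  refine ⟨Q 0 - (A + c) ^ 2 / (4 * ρ), fun t => ?_⟩
  have hsq : (A + c) * |t| ≤ ρ * |t| ^ 2 + (A + c) ^ 2 / (4 * ρ) := by
    rw [← sub_nonneg]
    have : ρ * |t| ^ 2 + (A + c) ^ 2 / (4 * ρ) - (A + c) * |t|
        = (2 * ρ * |t| - (A + c)) ^ 2 / (4 * ρ) := by field_simp; ring
    rw [this]; positivity
  have hAt : Q 0 - A * |t| ≤ Q t - ρ * t ^ 2 := by simpa using hA t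
  rw [sq_abs] at hsq
  linarith

theorem Real.log_abs_sub_le (a b : ℝ) : Real.log |a - b| ≤ |a| + |b| :=
  (Real.log_le_self (abs_nonneg _)).trans (abs_sub _ _)

theorem Fin.sum_filter_lt_add_le {n : ℕ} {f : Fin n → ℝ} (hf : ∀ i, 0 ≤ f i) :
    ∑ p ∈ univ.filter (fun p : Fin n × Fin n => p.1 < p.2), (f p.1 + f p.2)
      ≤ 2 * n * ∑ i, f i := by
  calc _ ≤ ∑ p : Fin n × Fin n, (f p.1 + f p.2) :=
        sum_le_sum_of_subset_of_nonneg (filter_subset _ _)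
          fun p _ _ => add_nonneg (hf _) (hf _)
    _ = 2 * n * ∑ i, f i := by
        simp only [Fintype.sum_prod_type, sum_add_distrib, sum_const, nsmul_eq_mul, ← mul_sum]
        ring

theorem le_discreteEnergy {Q : ℝ → ℝ} {n : ℕ} (hn : 2 ≤ n) {C : ℝ}
    (hC : ∀ t, C ≤ Q t - 4 * n / (n - 1) * |t|) (x : Fin n → ℝ) :
    C ≤ discreteEnergy Q n x := by
  have hn₁ : (1 : ℝ) < n := by exact_mod_cast hn
  have hQ : n * C + 4 * n / (n - 1) * ∑ i, |x i| ≤ ∑ i, Q (x i) := by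
    calc _ = ∑ i, (C + 4 * n / (n - 1) * |x i|) := by
          simp only [sum_add_distrib, sum_const, card_univ, Fintype.card_fin, nsmul_eq_mul, mul_sum]
      _ ≤ _ := sum_le_sum fun i _ => by linarith [hC (x i)]
  have hlog : ∑ p ∈ univ.filter (fun p : Fin n × Fin n => p.1 < p.2), Real.log |x p.1 - x p.2|
      ≤ 2 * n * ∑ i, |x i| :=
    (sum_le_sum fun p _ => Real.log_abs_sub_le _ _).trans
      (Fin.sum_filter_lt_add_le fun i => abs_nonneg (x i))
  unfold discreteEnergy
  calc C = 1 / n * (n * C + 4 * n / (n - 1) * ∑ i, |x i|)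
          - 2 / (n * (n - 1)) * (2 * n * ∑ i, |x i|) := by
        field_simp
        ring
    _ ≤ _ := by gcongr

theorem stmt_12_general (Q : ℝ → ℝ) (ρ : ℝ) (hρ : 0 < ρ)
    (hQ : ConvexOn ℝ Set.univ (fun x => Q x - ρ * x ^ 2))
    (n : ℕ) (hn : 2 ≤ n) :
    minEnergy Q n ≤ minEnergy Q (n + 1) := by
  obtain ⟨C, hC⟩ := exists_le_sub_mul_abs hρ hQ (4 * n / (n - 1))
  have hbdd : BddBelow {E | ∃ x : Fin n → ℝ, Function.Injective x ∧ E = discreteEnergy Q n x} :=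
    ⟨C, by rintro _ ⟨x, -, rfl⟩; exact le_discreteEnergy hn hC x⟩
  have hne : {E | ∃ x : Fin (n + 1) → ℝ,
      Function.Injective x ∧ E = discreteEnergy Q (n + 1) x}.Nonempty :=
    ⟨_, fun i => (i : ℝ), Nat.cast_injective.comp Fin.val_injective, rfl⟩
  refine le_csInf hne ?_
  rintro _ ⟨y, hy, rfl⟩
  have hdel (i : Fin (n + 1)) : minEnergy Q n ≤ discreteEnergy Q n (y ∘ i.succAbove) :=
    csInf_le hbdd ⟨_, hy.comp Fin.succAbove_right_injective, rfl⟩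
  have hsum := sum_le_sum fun i (_ : i ∈ univ) => hdel i
  rw [← discreteEnergy_succ_eq_sum Q hn, sum_const, card_univ, Fintype.card_fin,
    nsmul_eq_mul, Nat.cast_succ] at hsum
  exact le_of_mul_le_mul_left hsum (by positivity)

theorem stmt_12 (Q : ℝ → ℝ) (hQcont : Continuous Q) (ρ : ℝ) (hρ : 0 < ρ)
    (hQ : ConvexOn ℝ Set.univ (fun x => Q x - ρ * x ^ 2))
    (n : ℕ) (hn : 2 ≤ n) :
    minEnergy Q n ≤ minEnergy Q (n + 1) :=
  stmt_12_general Q ρ hρ hQ n hn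
end

section
/- Let x, y ∈ ℝⁿ be sorted in nondecreasing order. Then the squared 2-Wasserstein distance between the empirical measures μ(x) = (1/n)Σδ_{xᵢ} and μ(y) = (1/n)Σδ_{yᵢ} equals (1/n)·Σᵢ (xᵢ - yᵢ)², i.e., the infimum over couplings is attained by the monotone matching. -/
open MeasureTheory

/-- The squared 2-Wasserstein distance (as an extended nonnegative real),
defined as the infimum over couplings of the integral of the squared distance. -/
noncomputable def W2sq (μ ν : Measure ℝ) : ENNReal :=
  ⨅ (π : Measure (ℝ × ℝ)) (_ : π.map Prod.fst = μ) (_ : π.map Prod.snd = ν),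
    ∫⁻ p, ENNReal.ofReal ((p.1 - p.2) ^ 2) ∂π

/-- The empirical measure of a configuration of `n` points. -/
noncomputable def empirical (n : ℕ) (x : Fin n → ℝ) : Measure ℝ :=
  ((n : ENNReal)⁻¹) • ∑ i, Measure.dirac (x i)

/-!
The monotone coupling `(1/n) ∑ δ_(xᵢ, yᵢ)` gives the upper bound. For the lower bound, monotonicity
makes the pairs `(xᵢ, yᵢ)` cyclically monotone: the partial sums `a j = ∑_{k<j} y k (x (k+1) - x k)`
satisfy `y i (x j - x i) ≤ a j - a i`. Hence `f s = max_i (a i + y i (s - x i))` and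
`g t = max_j (x j t - a j)` satisfy `s t ≤ f s + g t` on the grid `{xᵢ} × {yⱼ}`, with equality at
the pairs `(xᵢ, yᵢ)`. Every coupling of the two empirical measures lives on that grid, so integrating
`(s² - 2 f s) + (t² - 2 g t) ≤ (s - t)²` against it bounds its cost below by `(1/n) ∑ (xᵢ - yᵢ)²`
(weak Kantorovich duality).
-/

open Finset

lemma mul_sub_le_sum_sub_sum {x y : ℕ → ℝ} (hx : Monotone x) (hy : Monotone y) (i j : ℕ) :
    y i * (x j - x i) ≤
      ∑ k ∈ range j, y k * (x (k + 1) - x k) - ∑ k ∈ range i, y k * (x (k + 1) - x k) := by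
  rcases le_total i j with hij | hji
  · induction j, hij using Nat.le_induction with
    | base => simp
    | succ j hij ih =>
      rw [sum_range_succ]
      nlinarith [hy hij, hx j.le_succ]
  · induction i, hji using Nat.le_induction with
    | base => simp
    | succ i hji ih =>
      rw [sum_range_succ]
      nlinarith [hy i.le_succ, hx i.le_succ, hx hji, hx (hji.trans i.le_succ)]

lemma Fin.exists_mul_sub_le_sub {n : ℕ} {x y : Fin n → ℝ} (hx : Monotone x) (hy : Monotone y) :
    ∃ a : Fin n → ℝ, ∀ i j, y i * (x j - x i) ≤ a j - a i := by
  cases n with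
  | zero => exact ⟨0, fun i => i.elim0⟩
  | succ m =>
    set x' := x ∘ fun k => Fin.clamp k m
    set y' := y ∘ fun k => Fin.clamp k m
    have hclamp (i : Fin (m + 1)) : Fin.clamp i m = i := Fin.ext (min_eq_left i.is_le)
    refine ⟨fun i => ∑ k ∈ range i, y' k * (x' (k + 1) - x' k), fun i j => ?_⟩
    simpa [x', y', hclamp] using
      mul_sub_le_sum_sub_sum (hx.comp Fin.clamp_monotone) (hy.comp Fin.clamp_monotone) i j

lemma Fin.exists_mul_le_add_of_monotone {n : ℕ} {x y : Fin n → ℝ} (hx : Monotone x)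
    (hy : Monotone y) :
    ∃ f g : ℝ → ℝ, (∀ i j, x i * y j ≤ f (x i) + g (y j)) ∧ ∀ i, f (x i) + g (y i) = x i * y i := by
  obtain ⟨a, ha⟩ := Fin.exists_mul_sub_le_sub hx hy
  refine ⟨fun s => ⨆ i, a i + y i * (s - x i), fun t => ⨆ j, x j * t - a j, ?_⟩
  have hf (i : Fin n) : ⨆ k, a k + y k * (x i - x k) = a i :=
    have : Nonempty (Fin n) := ⟨i⟩
    le_antisymm (ciSup_le fun k => by linarith [ha k i])
      (le_ciSup_of_le (Set.finite_range _).bddAbove i (by simp))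
  have hg (i : Fin n) : ⨆ j, x j * y i - a j = x i * y i - a i :=
    have : Nonempty (Fin n) := ⟨i⟩
    le_antisymm (ciSup_le fun j => by linarith [ha i j])
      (le_ciSup (f := fun j => x j * y i - a j) (Set.finite_range _).bddAbove i)
  refine ⟨fun i j => ?_, fun i => by simp only [hf, hg]; ring⟩
  simp only [hf]
  linarith [le_ciSup (Set.finite_range fun k => x k * y j - a k).bddAbove i]

lemma ofReal_integral_le_lintegral_ofReal {α : Type*} [MeasurableSpace α] {μ : Measure α}
    {f : α → ℝ} (hf : Integrable f μ) :
    ENNReal.ofReal (∫ a, f a ∂μ) ≤ ∫⁻ a, ENNReal.ofReal (f a) ∂μ := by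
  refine (ENNReal.ofReal_le_ofReal ?_).trans ENNReal.ofReal_toReal_le
  rw [integral_eq_lintegral_pos_part_sub_lintegral_neg_part hf]
  exact sub_le_self _ ENNReal.toReal_nonneg

lemma ofReal_integral_add_integral_le_lintegral {α β : Type*} [MeasurableSpace α]
    [MeasurableSpace β] {π : Measure (α × β)} {φ : α → ℝ} {ψ : β → ℝ} {c : α × β → ℝ}
    (hφ : Integrable φ (π.map Prod.fst)) (hψ : Integrable ψ (π.map Prod.snd))
    (hc : ∀ᵐ p ∂π, φ p.1 + ψ p.2 ≤ c p) :
    ENNReal.ofReal (∫ a, φ a ∂π.map Prod.fst + ∫ b, ψ b ∂π.map Prod.snd) ≤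
      ∫⁻ p, ENNReal.ofReal (c p) ∂π := by
  have hφ' : Integrable (fun p : α × β => φ p.1) π :=
    (integrable_map_measure hφ.1 measurable_fst.aemeasurable).1 hφ
  have hψ' : Integrable (fun p : α × β => ψ p.2) π :=
    (integrable_map_measure hψ.1 measurable_snd.aemeasurable).1 hψ
  rw [integral_map measurable_fst.aemeasurable hφ.1, integral_map measurable_snd.aemeasurable hψ.1,
    ← integral_add hφ' hψ']
  exact (ofReal_integral_le_lintegral_ofReal (hφ'.add hψ')).trans
    (lintegral_mono_ae (hc.mono fun p hp => ENNReal.ofReal_le_ofReal hp))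

section Empirical

variable {α β : Type*} [MeasurableSpace α] [MeasurableSpace β] {n : ℕ}

lemma map_smul_sum_dirac {f : α → β} (hf : Measurable f) (c : ENNReal) (z : Fin n → α) :
    (c • ∑ i, Measure.dirac (z i)).map f = c • ∑ i, Measure.dirac (f (z i)) := by
  simp only [Measure.map_smul, Measure.map_finset_sum' hf.aemeasurable,
    Measure.map_dirac' hf]

variable [MeasurableSingletonClass α]

lemma ae_smul_sum_dirac_mem_range (c : ENNReal) (z : Fin n → α) :
    ∀ᵐ a ∂(c • ∑ i, Measure.dirac (z i)), a ∈ Set.range z := by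
  refine Measure.ae_smul_measure ?_ c
  rw [ae_iff]
  simp [Measure.dirac_apply]

lemma integrable_inv_smul_sum_dirac (z : Fin n → α) (f : α → ℝ) :
    Integrable f ((n : ENNReal)⁻¹ • ∑ i, Measure.dirac (z i)) := by
  rw [Finset.smul_sum, integrable_finsetSum_measure]
  intro i _
  exact (integrable_dirac enorm_lt_top).smul_measure
    (ENNReal.inv_ne_top.2 (Nat.cast_ne_zero.2 i.pos.ne'))

lemma integral_inv_smul_sum_dirac (z : Fin n → α) (f : α → ℝ) :
    ∫ a, f a ∂((n : ENNReal)⁻¹ • ∑ i, Measure.dirac (z i)) = (n : ℝ)⁻¹ * ∑ i, f (z i) := by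
  rw [integral_smul_measure, integral_finsetSum_measure fun i _ => integrable_dirac enorm_lt_top]
  simp [integral_dirac]

end Empirical

lemma W2sq_empirical_le {n : ℕ} (x y : Fin n → ℝ) :
    W2sq (empirical n x) (empirical n y) ≤ ENNReal.ofReal ((n : ℝ)⁻¹ * ∑ i, (x i - y i) ^ 2) := by
  set π : Measure (ℝ × ℝ) := (n : ENNReal)⁻¹ • ∑ i, Measure.dirac (x i, y i)
  have hfst : π.map Prod.fst = empirical n x := map_smul_sum_dirac measurable_fst _ _
  have hsnd : π.map Prod.snd = empirical n y := map_smul_sum_dirac measurable_snd _ _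
  have hcost := ofReal_integral_eq_lintegral_ofReal
    (integrable_inv_smul_sum_dirac (fun i => (x i, y i)) fun p => (p.1 - p.2) ^ 2)
    (ae_of_all _ fun p => sq_nonneg (p.1 - p.2))
  rw [integral_inv_smul_sum_dirac] at hcost
  rw [hcost]
  exact iInf₂_le_of_le π hfst (iInf_le _ hsnd)

lemma le_W2sq_empirical {n : ℕ} {x y : Fin n → ℝ} (φ ψ : ℝ → ℝ)
    (h : ∀ i j, φ (x i) + ψ (y j) ≤ (x i - y j) ^ 2) :
    ENNReal.ofReal ((n : ℝ)⁻¹ * ∑ i, φ (x i) + (n : ℝ)⁻¹ * ∑ i, ψ (y i)) ≤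
      W2sq (empirical n x) (empirical n y) := by
  refine le_iInf₂ fun π hfst => le_iInf fun hsnd => ?_
  have hx : ∀ᵐ s ∂π.map Prod.fst, s ∈ Set.range x := by
    rw [hfst]
    exact ae_smul_sum_dirac_mem_range _ x
  have hy : ∀ᵐ t ∂π.map Prod.snd, t ∈ Set.range y := by
    rw [hsnd]
    exact ae_smul_sum_dirac_mem_range _ y
  have hsupp : ∀ᵐ p ∂π, φ p.1 + ψ p.2 ≤ (p.1 - p.2) ^ 2 := by
    filter_upwards [ae_of_ae_map measurable_fst.aemeasurable hx,
      ae_of_ae_map measurable_snd.aemeasurable hy] with p ⟨i, hi⟩ ⟨j, hj⟩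
    rw [← hi, ← hj]
    exact h i j
  have hφ : Integrable φ (π.map Prod.fst) := by
    rw [hfst]
    exact integrable_inv_smul_sum_dirac x φ
  have hψ : Integrable ψ (π.map Prod.snd) := by
    rw [hsnd]
    exact integrable_inv_smul_sum_dirac y ψ
  have := ofReal_integral_add_integral_le_lintegral hφ hψ hsupp
  rwa [hfst, hsnd, empirical, empirical, integral_inv_smul_sum_dirac,
    integral_inv_smul_sum_dirac] at this

theorem stmt_14_general (n : ℕ) (x y : Fin n → ℝ)
    (hx : Monotone x) (hy : Monotone y) :
    W2sq (empirical n x) (empirical n y)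
      = ENNReal.ofReal ((1 / (n : ℝ)) * ∑ i, (x i - y i) ^ 2) := by
  obtain ⟨f, g, hfg, hdiag⟩ := Fin.exists_mul_le_add_of_monotone hx hy
  rw [one_div]
  refine le_antisymm (W2sq_empirical_le x y) ?_
  refine le_of_eq_of_le ?_ (le_W2sq_empirical (fun s => s ^ 2 - 2 * f s)
    (fun t => t ^ 2 - 2 * g t) fun i j => by nlinarith [hfg i j])
  rw [← mul_add, ← sum_add_distrib]
  congr 2
  refine sum_congr rfl fun i _ => ?_
  linear_combination 2 * hdiag i

theorem stmt_14 (n : ℕ) (hn : 1 ≤ n) (x y : Fin n → ℝ)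
    (hx : Monotone x) (hy : Monotone y) :
    W2sq (empirical n x) (empirical n y)
      = ENNReal.ofReal ((1 / (n : ℝ)) * ∑ i, (x i - y i) ^ 2) :=
  stmt_14_general n x y hx hy
end
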